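/- Fix T ∈ ℕ, σ > 0, ρ ∈ [0, 1] and t ∈ (0, 1]. Let X₁, …, X_T and Z₁, …, Z_T be centered square-integrable real random variables on a common probability space with E[X_i X_j] = ρ^{|i−j|} σ² for all i, j, with E[Z_j X_i] = 0 for all i, j, and E[Z_j Z_k] = 0 for j ≠ k. Define Δ_{FMD,j} := √(1 + Σ_{i=1}^{j−1} 2^{j−1−i} ρ^{2(j−i)}) (so Δ_{FMD,1} = 1), and define reconstructions by X̂₁ := √t · X₁ + Z₁ and, for 2 ≤ j ≤ T, X̂_j := Σ_{i=1}^{j−1} (Δ_{FMD,i} ρ^{j−i} / Δ_{FMD,j}) · X̂_i + (√t / Δ_{FMD,j}) · X_j + Z_j. Then for every 1 ≤ j ≤ T, E[X_j X̂_j] = Δ_{FMD,j} · √t · σ². Consequently, if in addition E[X̂_j²] = σ², then E[(X_j − X̂_j)²] = 2(1 − Δ_{FMD,j} √t) σ². In particular for ρ = 1 one has Δ_{FMD,j} = 2^{(j−1)/2}, so the correlation gain grows exponentially in the frame index — the framewise-marginal decoder recovers from early errors. -/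

import Mathlib

/-!
By induction on `j` one proves the stronger `E[X_k X̂_j] = Δ_j √t ρ^{k−j} σ²` for all `k ≥ j`.
Expanding `X̂_j` by its recursion and using the orthogonality of the noises to the source, the
correlation becomes `(√t ρ^{k−j} σ² / Δ_j) (1 + Σ_{i<j} Δ_i² ρ^{2(j−i)})`, and the bracket is
`Δ_j²`: both sides of that identity satisfy `a_{j+1} = 1 + ρ² (2 a_j − 1)`. The distortion is then
`E[X_j²] − 2 E[X_j X̂_j] + E[X̂_j²]`.
-/

open MeasureTheory

/-- The correlation gain `Δ_{FMD,j} = √(1 + Σ_{i=1}^{j−1} 2^{j−1−i} ρ^{2(j−i)})` of the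
zero framewise-marginal perception loss decoder at frame `j` (so `Δ_{FMD,1} = 1`). -/
noncomputable def ΔFMD (ρ : ℝ) (j : ℕ) : ℝ :=
  Real.sqrt (1 + ∑ i ∈ Finset.Icc 1 (j - 1), (2 : ℝ) ^ (j - 1 - i) * ρ ^ (2 * (j - i)))

lemma ΔFMD_sq (ρ : ℝ) (j : ℕ) :
    ΔFMD ρ j ^ 2 = 1 + ∑ i ∈ Finset.Icc 1 (j - 1), (2 : ℝ) ^ (j - 1 - i) * ρ ^ (2 * (j - i)) := by
  refine Real.sq_sqrt (add_nonneg zero_le_one (Finset.sum_nonneg fun i _ => ?_))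
  rw [pow_mul]
  positivity

lemma ΔFMD_pos (ρ : ℝ) (j : ℕ) : 0 < ΔFMD ρ j := by
  refine Real.sqrt_pos.mpr (add_pos_of_pos_of_nonneg one_pos (Finset.sum_nonneg fun i _ => ?_))
  rw [pow_mul]
  positivity

lemma ΔFMD_one (ρ : ℝ) : ΔFMD ρ 1 = 1 := by
  simp [ΔFMD]

lemma ΔFMD_sq_succ (ρ : ℝ) (n : ℕ) :
    ΔFMD ρ (n + 2) ^ 2 = 1 + ρ ^ 2 * (2 * ΔFMD ρ (n + 1) ^ 2 - 1) := by
  have hshift : ∀ i ∈ Finset.Icc 1 n, (2 : ℝ) ^ (n + 1 - i) * ρ ^ (2 * (n + 2 - i))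
      = 2 * ρ ^ 2 * ((2 : ℝ) ^ (n - i) * ρ ^ (2 * (n + 1 - i))) := by
    intro i hi
    have hin := (Finset.mem_Icc.mp hi).2
    rw [show 2 * (n + 2 - i) = 2 * (n + 1 - i) + 2 by omega, pow_add,
      show (2 : ℝ) ^ (n + 1 - i) = 2 ^ (n - i) * 2 by rw [← pow_succ]; congr 1; omega]
    ring
  rw [ΔFMD_sq, ΔFMD_sq, show n + 2 - 1 = n + 1 by omega, Nat.add_sub_cancel,
    Finset.sum_Icc_succ_top (by omega),
    Finset.sum_congr rfl hshift, ← Finset.mul_sum, Nat.sub_self,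
    show 2 * (n + 2 - (n + 1)) = 2 by omega]
  ring

lemma ΔFMD_sq_eq_one_add_sum (ρ : ℝ) (j : ℕ) :
    ΔFMD ρ j ^ 2 = 1 + ∑ i ∈ Finset.Icc 1 (j - 1), ΔFMD ρ i ^ 2 * ρ ^ (2 * (j - i)) := by
  induction j with
  | zero => simp [ΔFMD]
  | succ n ih =>
    rcases n with _ | n
    · simp [ΔFMD_one]
    have hshift : ∀ i ∈ Finset.Icc 1 n, ΔFMD ρ i ^ 2 * ρ ^ (2 * (n + 2 - i))
        = ρ ^ 2 * (ΔFMD ρ i ^ 2 * ρ ^ (2 * (n + 1 - i))) := by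
      intro i hi
      rw [show 2 * (n + 2 - i) = 2 * (n + 1 - i) + 2 by grind, pow_add]
      ring
    rw [Nat.add_sub_cancel] at ih ⊢
    rw [ΔFMD_sq_succ, Finset.sum_Icc_succ_top (by omega), Finset.sum_congr rfl hshift,
      ← Finset.mul_sum, show 2 * (n + 2 - (n + 1)) = 2 by omega]
    linear_combination ρ ^ 2 * ih

section L2Pairing

variable {Ω : Type*} [MeasurableSpace Ω] {P : Measure Ω}

lemma integrable_mul_of_memLp_two {f g : Ω → ℝ} (hf : MemLp f 2 P) (hg : MemLp g 2 P) :
    Integrable (fun ω => f ω * g ω) P :=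
  hf.integrable_mul hg

lemma integral_mul_sum_add_add {ι : Type*} (s : Finset ι) (c : ι → ℝ) (a : ℝ)
    {f x z : Ω → ℝ} {g : ι → Ω → ℝ} (hf : MemLp f 2 P) (hg : ∀ i ∈ s, MemLp (g i) 2 P)
    (hx : MemLp x 2 P) (hz : MemLp z 2 P) :
    ∫ ω, f ω * ((∑ i ∈ s, c i * g i ω) + a * x ω + z ω) ∂P
      = ∑ i ∈ s, c i * ∫ ω, f ω * g i ω ∂P + a * ∫ ω, f ω * x ω ∂P + ∫ ω, f ω * z ω ∂P := by
  have hfg : ∀ i ∈ s, Integrable (fun ω => c i * (f ω * g i ω)) P :=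
    fun i hi => (integrable_mul_of_memLp_two hf (hg i hi)).const_mul _
  have hfx := (integrable_mul_of_memLp_two hf hx).const_mul a
  have hfz := integrable_mul_of_memLp_two hf hz
  have hsum : Integrable (fun ω => ∑ i ∈ s, c i * (f ω * g i ω)) P := integrable_finsetSum _ hfg
  simp_rw [mul_add, Finset.mul_sum, mul_left_comm (f _)]
  rw [integral_add (hsum.add hfx : Integrable (fun ω => _ + _) P) hfz, integral_add hsum hfx,
    integral_finsetSum _ hfg, integral_const_mul]
  simp_rw [integral_const_mul]

lemma integral_sub_sq {f g : Ω → ℝ} (hf : MemLp f 2 P) (hg : MemLp g 2 P) :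
    ∫ ω, (f ω - g ω) ^ 2 ∂P
      = ∫ ω, f ω ^ 2 ∂P - 2 * ∫ ω, f ω * g ω ∂P + ∫ ω, g ω ^ 2 ∂P := by
  have hfg := (integrable_mul_of_memLp_two hf hg).const_mul 2
  have hdiff : Integrable (fun ω => f ω ^ 2 - 2 * (f ω * g ω)) P := hf.integrable_sq.sub hfg
  simp_rw [sub_sq, mul_assoc]
  rw [integral_add hdiff hg.integrable_sq,
    integral_sub hf.integrable_sq hfg, integral_const_mul]

end L2Pairing

section Decoder

variable {Ω : Type*} [MeasurableSpace Ω] {P : Measure Ω} {T : ℕ} {X Z Xhat : ℕ → Ω → ℝ}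

lemma memLp_of_recursion (c : ℕ → ℕ → ℝ) (a : ℕ → ℝ)
    (hX : ∀ j, 1 ≤ j → j ≤ T → MemLp (X j) 2 P) (hZ : ∀ j, 1 ≤ j → j ≤ T → MemLp (Z j) 2 P)
    (hrec : ∀ j, 1 ≤ j → j ≤ T → Xhat j = fun ω =>
      (∑ i ∈ Finset.Icc 1 (j - 1), c j i * Xhat i ω) + a j * X j ω + Z j ω) :
    ∀ j, 1 ≤ j → j ≤ T → MemLp (Xhat j) 2 P := by
  intro j
  induction j using Nat.strong_induction_on with
  | _ j ih =>
    intro hj1 hjT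
    rw [hrec j hj1 hjT]
    refine ((memLp_finsetSum _ fun i hi => ?_).add ((hX j hj1 hjT).const_mul _)).add
      (hZ j hj1 hjT)
    have hi := Finset.mem_Icc.mp hi
    exact (ih i (by omega) hi.1 (by omega)).const_mul _

lemma integral_mul_of_recursion {ρ t σ : ℝ}
    (hX : ∀ j, 1 ≤ j → j ≤ T → MemLp (X j) 2 P) (hZ : ∀ j, 1 ≤ j → j ≤ T → MemLp (Z j) 2 P)
    (hXX : ∀ i j, 1 ≤ i → i ≤ T → 1 ≤ j → j ≤ T →
      ∫ ω, X i ω * X j ω ∂P = ρ ^ ((i : ℤ) - (j : ℤ)).natAbs * σ ^ 2)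
    (hZX : ∀ i j, 1 ≤ i → i ≤ T → 1 ≤ j → j ≤ T → ∫ ω, Z j ω * X i ω ∂P = 0)
    (hrec : ∀ j, 1 ≤ j → j ≤ T → Xhat j = fun ω =>
      (∑ i ∈ Finset.Icc 1 (j - 1), (ΔFMD ρ i * ρ ^ (j - i) / ΔFMD ρ j) * Xhat i ω)
        + (Real.sqrt t / ΔFMD ρ j) * X j ω + Z j ω) :
    ∀ j, 1 ≤ j → ∀ k, j ≤ k → k ≤ T →
      ∫ ω, X k ω * Xhat j ω ∂P = ΔFMD ρ j * Real.sqrt t * ρ ^ (k - j) * σ ^ 2 := by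
  have hmem := memLp_of_recursion _ _ hX hZ hrec
  intro j
  induction j using Nat.strong_induction_on with
  | _ j ih =>
    intro hj1 k hjk hkT
    have hjT : j ≤ T := hjk.trans hkT
    have hXkXj : ∫ ω, X k ω * X j ω ∂P = ρ ^ (k - j) * σ ^ 2 := by
      rw [hXX k j (by omega) hkT hj1 hjT]
      congr 2
      omega
    have hXkZj : ∫ ω, X k ω * Z j ω ∂P = 0 := by
      simp_rw [mul_comm (X k _)]
      exact hZX k j (by omega) hkT hj1 hjT
    have hterm : ∀ i ∈ Finset.Icc 1 (j - 1),
        ΔFMD ρ i * ρ ^ (j - i) / ΔFMD ρ j * ∫ ω, X k ω * Xhat i ω ∂P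
          = Real.sqrt t * ρ ^ (k - j) * σ ^ 2 / ΔFMD ρ j * (ΔFMD ρ i ^ 2 * ρ ^ (2 * (j - i))) := by
      intro i hi
      have hi := Finset.mem_Icc.mp hi
      rw [ih i (by omega) hi.1 k (by omega) hkT,
        show k - i = (k - j) + (j - i) by omega, two_mul, pow_add, pow_add]
      ring
    rw [hrec j hj1 hjT, integral_mul_sum_add_add _ _ _ (hX k (by omega) hkT)
        (fun i hi => hmem i (Finset.mem_Icc.mp hi).1 (by grind)) (hX j hj1 hjT) (hZ j hj1 hjT),
      Finset.sum_congr rfl hterm, ← Finset.mul_sum,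
      ← sub_eq_iff_eq_add'.mpr (ΔFMD_sq_eq_one_add_sum ρ j), hXkXj, hXkZj]
    have hΔ := (ΔFMD_pos ρ j).ne'
    field_simp
    ring

end Decoder

theorem statement14_general {Ω : Type*} [MeasurableSpace Ω] (P : Measure Ω)
    (T : ℕ) (σ ρ t : ℝ) (X Z Xhat : ℕ → Ω → ℝ)
    (hXmem : ∀ j, 1 ≤ j → j ≤ T → MemLp (X j) 2 P)
    (hZmem : ∀ j, 1 ≤ j → j ≤ T → MemLp (Z j) 2 P)
    (hXX : ∀ i j, 1 ≤ i → i ≤ T → 1 ≤ j → j ≤ T →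
      ∫ ω, X i ω * X j ω ∂P = ρ ^ ((i : ℤ) - (j : ℤ)).natAbs * σ ^ 2)
    (hZX : ∀ i j, 1 ≤ i → i ≤ T → 1 ≤ j → j ≤ T → ∫ ω, Z j ω * X i ω ∂P = 0)
    (hXhat1 : Xhat 1 = fun ω => Real.sqrt t * X 1 ω + Z 1 ω)
    (hXhatrec : ∀ j, 2 ≤ j → j ≤ T → Xhat j = fun ω =>
      (∑ i ∈ Finset.Icc 1 (j - 1), (ΔFMD ρ i * ρ ^ (j - i) / ΔFMD ρ j) * Xhat i ω)
        + (Real.sqrt t / ΔFMD ρ j) * X j ω + Z j ω) :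
    ∀ j, 1 ≤ j → j ≤ T →
      (∫ ω, X j ω * Xhat j ω ∂P = ΔFMD ρ j * Real.sqrt t * σ ^ 2) ∧
      ((∫ ω, Xhat j ω ^ 2 ∂P = σ ^ 2) →
        ∫ ω, (X j ω - Xhat j ω) ^ 2 ∂P = 2 * (1 - ΔFMD ρ j * Real.sqrt t) * σ ^ 2) := by
  -- Since `ΔFMD ρ 1 = 1`, the first frame follows the general recursion with an empty sum.
  have hrec : ∀ j, 1 ≤ j → j ≤ T → Xhat j = fun ω =>
      (∑ i ∈ Finset.Icc 1 (j - 1), (ΔFMD ρ i * ρ ^ (j - i) / ΔFMD ρ j) * Xhat i ω)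
        + (Real.sqrt t / ΔFMD ρ j) * X j ω + Z j ω := by
    intro j hj1 hjT
    rcases hj1.eq_or_lt with rfl | hj2
    · simp [hXhat1, ΔFMD_one]
    · exact hXhatrec j hj2 hjT
  intro j hj1 hjT
  have hcorr : ∫ ω, X j ω * Xhat j ω ∂P = ΔFMD ρ j * Real.sqrt t * σ ^ 2 := by
    simpa using integral_mul_of_recursion hXmem hZmem hXX hZX hrec j hj1 j le_rfl hjT
  refine ⟨hcorr, fun hvar => ?_⟩
  have hXsq : ∫ ω, X j ω ^ 2 ∂P = σ ^ 2 := by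
    simpa [sq] using hXX j j hj1 hjT hj1 hjT
  rw [integral_sub_sq (hXmem j hj1 hjT) (memLp_of_recursion _ _ hXmem hZmem hrec j hj1 hjT),
    hXsq, hcorr, hvar]
  ring

/-- Per-frame correlation and distortion of the 0-PLF-FMD reconstructions
`X̂₁ = √t·X₁ + Z₁`,
`X̂_j = Σ_{i=1}^{j−1} (Δ_{FMD,i} ρ^{j−i}/Δ_{FMD,j})·X̂_i + (√t/Δ_{FMD,j})·X_j + Z_j`
for a stationary source with covariance `E[X_i X_j] = ρ^{|i−j|}σ²` and orthogonal noises: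
for every `1 ≤ j ≤ T`, `E[X_j X̂_j] = Δ_{FMD,j}·√t·σ²`, and if moreover `E[X̂_j²] = σ²`,
then `E[(X_j − X̂_j)²] = 2(1 − Δ_{FMD,j}√t)σ²`.  For `ρ = 1`, `Δ_{FMD,j} = 2^{(j−1)/2}`
grows exponentially: the framewise-marginal decoder recovers from early errors. -/
theorem statement14 {Ω : Type*} [MeasurableSpace Ω] (P : Measure Ω) [IsProbabilityMeasure P]
    (T : ℕ) (σ ρ t : ℝ) (hσ : 0 < σ) (hρ : ρ ∈ Set.Icc (0 : ℝ) 1) (ht : t ∈ Set.Ioc (0 : ℝ) 1)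
    (X Z Xhat : ℕ → Ω → ℝ)
    (hXmem : ∀ j, 1 ≤ j → j ≤ T → MemLp (X j) 2 P)
    (hZmem : ∀ j, 1 ≤ j → j ≤ T → MemLp (Z j) 2 P)
    (hXcentered : ∀ j, 1 ≤ j → j ≤ T → ∫ ω, X j ω ∂P = 0)
    (hZcentered : ∀ j, 1 ≤ j → j ≤ T → ∫ ω, Z j ω ∂P = 0)
    (hXX : ∀ i j, 1 ≤ i → i ≤ T → 1 ≤ j → j ≤ T →
      ∫ ω, X i ω * X j ω ∂P = ρ ^ ((i : ℤ) - (j : ℤ)).natAbs * σ ^ 2)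
    (hZX : ∀ i j, 1 ≤ i → i ≤ T → 1 ≤ j → j ≤ T → ∫ ω, Z j ω * X i ω ∂P = 0)
    (hZZ : ∀ j k, 1 ≤ j → j ≤ T → 1 ≤ k → k ≤ T → j ≠ k → ∫ ω, Z j ω * Z k ω ∂P = 0)
    (hXhat1 : Xhat 1 = fun ω => Real.sqrt t * X 1 ω + Z 1 ω)
    (hXhatrec : ∀ j, 2 ≤ j → j ≤ T → Xhat j = fun ω =>
      (∑ i ∈ Finset.Icc 1 (j - 1), (ΔFMD ρ i * ρ ^ (j - i) / ΔFMD ρ j) * Xhat i ω)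
        + (Real.sqrt t / ΔFMD ρ j) * X j ω + Z j ω) :
    ∀ j, 1 ≤ j → j ≤ T →
      (∫ ω, X j ω * Xhat j ω ∂P = ΔFMD ρ j * Real.sqrt t * σ ^ 2) ∧
      ((∫ ω, Xhat j ω ^ 2 ∂P = σ ^ 2) →
        ∫ ω, (X j ω - Xhat j ω) ^ 2 ∂P = 2 * (1 - ΔFMD ρ j * Real.sqrt t) * σ ^ 2) :=
  statement14_general P T σ ρ t X Z Xhat hXmem hZmem hXX hZX hXhat1 hXhatrec
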